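/- Let d, m ≥ 1 and divide [2dm] into 2m intervals J₁,...,J_{2m} of size d; label elements of J_k from 1 to d if k is odd and from d down to 1 if k is even, and let A_i be the set of elements labelled i. A non-crossing partition π of [2dm] with blocks of even cardinality belongs to NC*(d,m) (meaning: any two cyclically consecutive elements of a block lie in intervals J_k of different parity) if and only if π is finer than the partition {A₁,...,A_d}, i.e. every block of π is contained in a single label class A_i. -/

import Mathlib

/-!
Walk around `[2dm]` with the height `sawtooth d`, which rises by one along the even-indexed
intervals and falls by one along the odd-indexed ones, so that
`2 * label d n + 1 = sawtooth d n + sawtooth d (n + 1)`. If `l` follows `i` in a block, then by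
non-crossing the arc strictly between them is a union of blocks; when each of these blocks is
balanced (as many elements in even- as in odd-indexed intervals), the height at `l` equals the
height at `i + 1`, and then `i` and `l` have the same label exactly when they lie in intervals of
different parity. Blocks of `NC*(d,m)` are balanced because the successor permutation of a block
swaps the two kinds of intervals. Conversely, by induction on the length of the arc, equal
labels make every inner block alternate at each step except the one leaving its last element,
and for a block of even size this already forces balance.
-/

open Classical

/-- `i` and `j` lie in the same block of the partition `P`. -/
def SameBlock {N : ℕ} (P : Finpartition (Finset.univ : Finset (Fin N))) (i j : Fin N) : Prop :=
  ∃ b ∈ P.parts, i ∈ b ∧ j ∈ b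

/-- A partition of `[N]` is non-crossing if for `i < j < k < l`, `i ∼ k` and `j ∼ l`
imply `i ∼ j` (equivalent for the linear and the cyclic order). -/
def IsNonCrossing {N : ℕ} (P : Finpartition (Finset.univ : Finset (Fin N))) : Prop :=
  ∀ i j k l : Fin N, i < j → j < k → k < l →
    SameBlock P i k → SameBlock P j l → SameBlock P i j

/-- `l` is the cyclic successor of `k` inside `B`: either `B = {k}` and `l = k`, or
`l ∈ B \ {k}` minimizes the cyclic distance `(x − k) mod N` over `x ∈ B \ {k}`; thus no
other element of the block lies cyclically strictly between `k` and `l`. -/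
def IsCyclicSuccIn {N : ℕ} (B : Finset (Fin N)) (k l : Fin N) : Prop :=
  k ∈ B ∧ l ∈ B ∧
    ((B = {k} ∧ l = k) ∨
      (l ≠ k ∧ ∀ x ∈ B, x ≠ k → (l - k).val ≤ (x - k).val))

/-- The (0-based) label of the 0-indexed element `j` of `[2dm]`: the intervals
`J_k` have size `d`; elements are labelled `0,...,d−1` on the even-indexed (0-based)
intervals and `d−1,...,0` on the odd-indexed ones. -/
def label (d j : ℕ) : ℕ :=
  if (j / d) % 2 = 0 then j % d else d - 1 - j % d

open Finset

def sawtoothSlope (d n : ℕ) : ℤ := if n / d % 2 = 0 then 1 else -1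

def sawtooth (d n : ℕ) : ℤ := if n / d % 2 = 0 then (n % d : ℕ) else d - (n % d : ℕ)

section Sawtooth

variable {d : ℕ}

lemma div_mod_two_mod_of_dvd {N : ℕ} (hN : 2 * d ∣ N) (n : ℕ) : n % N / d % 2 = n / d % 2 := by
  rw [← Nat.mod_mul_right_div_self, ← Nat.mod_mul_right_div_self n,
    Nat.mod_mod_of_dvd n (by rwa [mul_comm])]

lemma sawtoothSlope_mod_of_dvd {N : ℕ} (hN : 2 * d ∣ N) (n : ℕ) :
    sawtoothSlope d (n % N) = sawtoothSlope d n := by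
  simp only [sawtoothSlope, div_mod_two_mod_of_dvd hN]

lemma sawtooth_mod_of_dvd {N : ℕ} (hN : 2 * d ∣ N) (n : ℕ) :
    sawtooth d (n % N) = sawtooth d n := by
  simp only [sawtooth, div_mod_two_mod_of_dvd hN, Nat.mod_mod_of_dvd n (dvd_of_mul_left_dvd hN)]

lemma sawtoothSlope_eq_one_or_neg_one (n : ℕ) : sawtoothSlope d n = 1 ∨ sawtoothSlope d n = -1 := by
  unfold sawtoothSlope; split_ifs <;> simp

lemma sawtoothSlope_eq_neg_iff (a b : ℕ) :
    sawtoothSlope d a = -sawtoothSlope d b ↔ a / d % 2 ≠ b / d % 2 := by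
  unfold sawtoothSlope; split_ifs <;> simp <;> omega

lemma sawtooth_succ (hd : 0 < d) (n : ℕ) :
    sawtooth d (n + 1) = sawtooth d n + sawtoothSlope d n := by
  obtain ⟨q, r, hr, rfl⟩ : ∃ q r, r < d ∧ n = d * q + r :=
    ⟨n / d, n % d, Nat.mod_lt _ hd, (Nat.div_add_mod n d).symm⟩
  have hn : (d * q + r) / d = q ∧ (d * q + r) % d = r := by
    rw [Nat.mul_add_div hd, Nat.mul_add_mod, Nat.div_eq_of_lt hr, Nat.mod_eq_of_lt hr, add_zero]
    exact ⟨rfl, rfl⟩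
  obtain h | rfl := Nat.lt_or_ge (r + 1) d |>.imp_right (fun h => (by omega : d = r + 1))
  · have hn1 : (d * q + r + 1) / d = q ∧ (d * q + r + 1) % d = r + 1 := by
      rw [add_assoc, Nat.mul_add_div hd, Nat.mul_add_mod, Nat.div_eq_of_lt h, Nat.mod_eq_of_lt h]
      exact ⟨rfl, rfl⟩
    simp only [sawtooth, sawtoothSlope, hn, hn1]
    split_ifs <;> push_cast <;> ring
  · have hn1 : ((r + 1) * q + r + 1) / (r + 1) = q + 1 ∧ ((r + 1) * q + r + 1) % (r + 1) = 0 := by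
      rw [show (r + 1) * q + r + 1 = (r + 1) * (q + 1) by ring, Nat.mul_div_cancel_left _ hd,
        Nat.mul_mod_right]
      exact ⟨rfl, rfl⟩
    simp only [sawtooth, sawtoothSlope, hn, hn1]
    split_ifs <;> push_cast <;> omega

lemma sum_Ico_sawtoothSlope (hd : 0 < d) {a b : ℕ} (hab : a ≤ b) :
    ∑ n ∈ Ico a b, sawtoothSlope d n = sawtooth d b - sawtooth d a := by
  simpa only [sawtooth_succ hd, add_sub_cancel_left] using sum_Ico_sub (sawtooth d) hab

lemma two_mul_label_add_one (hd : 0 < d) (n : ℕ) :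
    2 * (label d n : ℤ) + 1 = sawtooth d n + sawtooth d (n + 1) := by
  have hr : n % d < d := Nat.mod_lt _ hd
  rw [sawtooth_succ hd]
  unfold label sawtooth sawtoothSlope
  split_ifs <;> push_cast [Nat.sub_sub, Nat.cast_sub (show 1 + n % d ≤ d by omega)] <;> ring

lemma label_eq_label_iff (hd : 0 < d) {p q : ℕ} (h : sawtooth d q = sawtooth d (p + 1)) :
    label d p = label d q ↔ p / d % 2 ≠ q / d % 2 := by
  have hp := two_mul_label_add_one hd p
  have hq := two_mul_label_add_one hd q
  rw [sawtooth_succ hd p] at hp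
  rw [sawtooth_succ hd q, h, sawtooth_succ hd p] at hq
  rw [ne_comm, ← sawtoothSlope_eq_neg_iff]
  constructor <;> intro <;> omega

end Sawtooth

section Cyclic

variable {N : ℕ}

lemma val_sub_add_val (a b : Fin N) :
    ((a - b : Fin N) : ℕ) + b = a + if (b : ℕ) ≤ a then 0 else N := by
  split_ifs with h
  · rw [Fin.sub_val_of_le h]; omega
  · rw [Fin.coe_sub_iff_lt.2 (not_le.1 h)]; omega

variable [NeZero N]

lemma eq_of_val_sub_eq {i p q : Fin N} (h : (p - i).val = (q - i).val) : p = q :=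
  sub_left_inj.1 (Fin.ext h)

lemma val_sub_pos {i p : Fin N} (h : p ≠ i) : 0 < (p - i).val :=
  Nat.pos_of_ne_zero fun h0 => h (sub_eq_zero.1 (Fin.ext h0))

lemma val_sub_eq_val_sub_sub {i p q : Fin N} (h : (q - i).val ≤ (p - i).val) :
    (p - q).val = (p - i).val - (q - i).val := by
  rw [← sub_sub_sub_cancel_right p q i, Fin.sub_val_of_le h]

lemma val_add_val_sub_mod (i x : Fin N) : (i.val + (x - i).val) % N = x.val := by
  rw [← Fin.val_add, add_sub_cancel]

lemma val_ofNat_sub {i : Fin N} {n : ℕ} (h₁ : i.val ≤ n) (h₂ : n < i.val + N) :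
    (Fin.ofNat N n - i).val = n - i.val := by
  have : Fin.ofNat N n = i + Fin.ofNat N (n - i.val) := by
    ext
    rw [Fin.val_add, Fin.val_ofNat, Fin.val_ofNat, Nat.add_mod_mod, Nat.add_sub_cancel' h₁]
  rw [this, add_sub_cancel_left, Fin.val_ofNat, Nat.mod_eq_of_lt (by omega)]

end Cyclic

section CyclicSucc

variable {N : ℕ} {B : Finset (Fin N)} {k l : Fin N}

lemma exists_isCyclicSuccIn (hk : k ∈ B) : ∃ l, IsCyclicSuccIn B k l := by
  by_cases h : ∃ y ∈ B, y ≠ k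
  · obtain ⟨y, hy, hyk⟩ := h
    obtain ⟨l, hl, hmin⟩ := exists_min_image (B.filter (· ≠ k)) (fun x => (x - k).val)
      ⟨y, mem_filter.2 ⟨hy, hyk⟩⟩
    rw [mem_filter] at hl
    exact ⟨l, hk, hl.1, Or.inr ⟨hl.2, fun x hx hxk => hmin x (mem_filter.2 ⟨hx, hxk⟩)⟩⟩
  · push Not at h
    exact ⟨k, hk, hk, Or.inl ⟨eq_singleton_iff_unique_mem.2 ⟨hk, h⟩, rfl⟩⟩

lemma IsCyclicSuccIn.val_sub_le (h : IsCyclicSuccIn B k l) {z : Fin N} (hz : z ∈ B)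
    (hzk : z ≠ k) : (l - k).val ≤ (z - k).val := by
  obtain ⟨-, -, ⟨rfl, -⟩ | ⟨-, hmin⟩⟩ := h
  · exact absurd (mem_singleton.1 hz) hzk
  · exact hmin z hz hzk

lemma IsCyclicSuccIn.ne (h : IsCyclicSuccIn B k l) (hB : B.Nontrivial) : l ≠ k := by
  obtain ⟨-, -, ⟨hBk, -⟩ | ⟨hlk, -⟩⟩ := h
  · exact absurd hBk hB.ne_singleton
  · exact hlk

lemma IsCyclicSuccIn.left_unique (hB : B.Nontrivial) {k₁ k₂ : Fin N}
    (h₁ : IsCyclicSuccIn B k₁ l) (h₂ : IsCyclicSuccIn B k₂ l) : k₁ = k₂ := by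
  by_contra hne
  have e₁ := h₁.val_sub_le h₂.1 (Ne.symm hne)
  have e₂ := h₂.val_sub_le h₁.1 hne
  have hl₁ := h₁.ne hB
  have hl₂ := h₂.ne hB
  have := val_sub_add_val l k₁
  have := val_sub_add_val l k₂
  have := val_sub_add_val k₁ k₂
  have := val_sub_add_val k₂ k₁
  have := Fin.val_injective.ne hne
  have := Fin.val_injective.ne hl₁
  have := Fin.val_injective.ne hl₂
  split_ifs at * <;> omega

lemma eq_of_forall_isCyclicSuccIn [NeZero N] {α : Type*} {f : Fin N → α}
    (h : ∀ k ∈ B, ∀ l, IsCyclicSuccIn B k l → f k = f l) {i j : Fin N} (hi : i ∈ B)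
    (hj : j ∈ B) : f i = f j := by
  induction hn : (j - i).val using Nat.strong_induction_on generalizing i with
  | _ n ih =>
    by_cases hji : j = i
    · rw [hji]
    obtain ⟨l, hl⟩ := exists_isCyclicSuccIn hi
    have hle := hl.val_sub_le hj hji
    have hpos := val_sub_pos (hl.ne ⟨j, hj, i, hi, hji⟩)
    rw [h i hi l hl]
    exact ih _ (by rw [← hn, val_sub_eq_val_sub_sub hle]; omega) hl.2.1 rfl

end CyclicSucc

def cyclicIoo {N : ℕ} (i l : Fin N) : Finset (Fin N) :=
  univ.filter fun x => 0 < (x - i).val ∧ (x - i).val < (l - i).val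

lemma mem_cyclicIoo {N : ℕ} {i l x : Fin N} :
    x ∈ cyclicIoo i l ↔ 0 < (x - i).val ∧ (x - i).val < (l - i).val := by
  simp [cyclicIoo]

section NonCrossing

variable {N : ℕ} {π : Finpartition (univ : Finset (Fin N))}

lemma SameBlock.symm {i j : Fin N} (h : SameBlock π i j) : SameBlock π j i :=
  let ⟨b, hb, hi, hj⟩ := h; ⟨b, hb, hj, hi⟩

lemma SameBlock.trans {i j k : Fin N} (hij : SameBlock π i j) (hjk : SameBlock π j k) :
    SameBlock π i k := by
  obtain ⟨b, hb, hi, hj⟩ := hij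
  obtain ⟨c, hc, hj', hk⟩ := hjk
  exact ⟨b, hb, hi, π.eq_of_mem_parts hc hb hj' hj ▸ hk⟩

lemma SameBlock.mem {i j : Fin N} {b : Finset (Fin N)} (h : SameBlock π i j)
    (hb : b ∈ π.parts) (hi : i ∈ b) : j ∈ b := by
  obtain ⟨c, hc, hi', hj⟩ := h
  exact π.eq_of_mem_parts hc hb hi' hi ▸ hj

/-- The linear condition applies to whichever rotation of `i, x, l, y` is increasing. -/
lemma IsNonCrossing.sameBlock_of_cyclic (hnc : IsNonCrossing π) {i x l y : Fin N}
    (hil : SameBlock π i l) (hxy : SameBlock π x y) (hx : 0 < (x - i).val)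
    (hxl : (x - i).val < (l - i).val) (hly : (l - i).val < (y - i).val) : SameBlock π i x := by
  have := val_sub_add_val x i
  have := val_sub_add_val l i
  have := val_sub_add_val y i
  have := x.isLt
  have := l.isLt
  have := y.isLt
  rcases le_or_gt i x with hix | hxi <;> rcases le_or_gt i l with hil' | hli <;>
    rcases le_or_gt i y with hiy | hyi <;> split_ifs at * <;> try omega
  · exact hnc i x l y (by omega) (by omega) (by omega) hil hxy
  · exact (hnc y i x l (by omega) (by omega) (by omega) hxy.symm hil).symm.trans hxy.symm
  · exact hil.trans <|
      (hnc l y i x (by omega) (by omega) (by omega) hil.symm hxy.symm).trans hxy.symm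
  · exact hil.trans (hnc x l y i (by omega) (by omega) (by omega) hxy hil.symm).symm

lemma IsNonCrossing.subset_cyclicIoo [NeZero N] (hnc : IsNonCrossing π) {b b' : Finset (Fin N)}
    (hb : b ∈ π.parts) (hb' : b' ∈ π.parts) {i l x : Fin N} (hil : IsCyclicSuccIn b i l)
    (hxb' : x ∈ b') (hx : x ∈ cyclicIoo i l) : b' ⊆ cyclicIoo i l := by
  obtain ⟨hx0, hxl⟩ := mem_cyclicIoo.1 hx
  have hxb : x ∉ b := fun h => by
    have hxi : x ≠ i := by rintro rfl; simp at hx0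
    exact absurd (hil.val_sub_le h hxi) (by omega)
  intro y hy
  have hyb : y ∉ b := fun h => hxb (π.eq_of_mem_parts hb' hb hy h ▸ hxb')
  have hyi : y ≠ i := fun h => hyb (h ▸ hil.1)
  have hyl : y ≠ l := fun h => hyb (h ▸ hil.2.1)
  refine mem_cyclicIoo.2 ⟨val_sub_pos hyi, not_le.1 fun hly => hxb ?_⟩
  have hly' : (l - i).val < (y - i).val :=
    lt_of_le_of_ne hly fun h => hyl (eq_of_val_sub_eq h).symm
  exact (hnc.sameBlock_of_cyclic ⟨b, hb, hil.1, hil.2.1⟩ ⟨b', hb', hxb', hy⟩ hx0 hxl hly').mem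
    hb hil.1

end NonCrossing

lemma nontrivial_of_even_card {α : Type*} {s : Finset α} (hs : Even s.card) {x : α}
    (hx : x ∈ s) : s.Nontrivial := by
  rw [← one_lt_card_iff_nontrivial]
  obtain ⟨k, hk⟩ := hs
  have := card_pos.2 ⟨x, hx⟩
  omega

/-- Summing `σ ∘ g = -σ` over the permutation `g` of `s` gives `2 ∑ σ = σ x₀ + σ (g x₀)`,
so `|∑ σ| ≤ 1`, while `∑ σ ≡ #s` is even. -/
lemma sum_eq_zero_of_neg_comp {α : Type*} {s : Finset α} {σ : α → ℤ} {g : α → α}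
    (hσ : ∀ x ∈ s, σ x = 1 ∨ σ x = -1) (hg : ∀ x ∈ s, g x ∈ s) (hinj : Set.InjOn g s)
    {x₀ : α} (hx₀ : x₀ ∈ s) (hflip : ∀ x ∈ s, x ≠ x₀ → σ (g x) = -σ x) (heven : Even s.card) :
    ∑ x ∈ s, σ x = 0 := by
  classical
  have himage : s.image g = s :=
    eq_of_subset_of_card_le (image_subset_iff.2 hg) (card_image_of_injOn hinj).ge
  have hperm : ∑ x ∈ s, σ (g x) = ∑ x ∈ s, σ x := by rw [← sum_image hinj, himage]
  have hflipped : ∑ x ∈ s.erase x₀, σ (g x) = -∑ x ∈ s.erase x₀, σ x := by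
    rw [← sum_neg_distrib]
    exact sum_congr rfl fun x hx => hflip x (mem_of_mem_erase hx) (ne_of_mem_erase hx)
  have hparity : Even (∑ x ∈ s, σ x + s.card) := by
    have : Even (∑ x ∈ s, (σ x + 1)) :=
      even_sum _ fun x hx => by rcases hσ x hx with h | h <;> simp [h]
    simpa [sum_add_distrib] using this
  have := add_sum_erase s (fun x => σ (g x)) hx₀
  have := add_sum_erase s σ hx₀
  obtain ⟨a, ha⟩ := hparity
  obtain ⟨c, hc⟩ := heven
  rcases hσ x₀ hx₀ with h₀ | h₀ <;> rcases hσ (g x₀) (hg x₀ hx₀) with h₁ | h₁ <;> omega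

section Heights

variable {d N : ℕ}

lemma sum_sawtoothSlope_eq_zero {B : Finset (Fin N)} (heven : Even B.card) {x₀ : Fin N}
    (hx₀ : x₀ ∈ B)
    (hflip : ∀ x ∈ B, x ≠ x₀ → ∀ l, IsCyclicSuccIn B x l → x.val / d % 2 ≠ l.val / d % 2) :
    ∑ x ∈ B, sawtoothSlope d x = 0 := by
  have hB := nontrivial_of_even_card heven hx₀
  choose! g hg using fun x (hx : x ∈ B) => exists_isCyclicSuccIn hx
  refine sum_eq_zero_of_neg_comp (fun x _ => sawtoothSlope_eq_one_or_neg_one x)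
    (fun x hx => (hg x hx).2.1) (fun x hx y hy hxy => (hg x hx).left_unique hB (hxy ▸ hg y hy))
    hx₀ (fun x hx hxx₀ => (sawtoothSlope_eq_neg_iff _ _).2 (hflip x hx hxx₀ _ (hg x hx)).symm)
    heven

variable [NeZero N]

lemma sum_cyclicIoo_sawtoothSlope (hd : 0 < d) (hN : 2 * d ∣ N) {i l : Fin N} (hli : l ≠ i) :
    ∑ x ∈ cyclicIoo i l, sawtoothSlope d x = sawtooth d l - sawtooth d (i + 1) := by
  have hpos := val_sub_pos hli
  have hlt := (l - i).isLt
  calc ∑ x ∈ cyclicIoo i l, sawtoothSlope d x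
      = ∑ n ∈ Ico (i + 1 : ℕ) (i + (l - i).val), sawtoothSlope d n := by
        refine sum_nbij' (fun x => i + (x - i).val) (Fin.ofNat N) ?_ ?_ ?_ ?_ ?_
        · intro x hx
          rw [mem_cyclicIoo] at hx
          rw [mem_Ico]
          omega
        · intro n hn
          rw [mem_Ico] at hn
          rw [mem_cyclicIoo, val_ofNat_sub (by omega) (by omega)]
          omega
        · intro x _
          ext
          rw [Fin.val_ofNat, val_add_val_sub_mod]
        · intro n hn
          rw [mem_Ico] at hn
          rw [val_ofNat_sub (by omega) (by omega)]
          omega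
        · intro x _
          rw [← sawtoothSlope_mod_of_dvd hN (i + _), val_add_val_sub_mod]
    _ = sawtooth d (i + (l - i).val) - sawtooth d (i + 1) := sum_Ico_sawtoothSlope hd (by omega)
    _ = sawtooth d l - sawtooth d (i + 1) := by rw [← sawtooth_mod_of_dvd hN, val_add_val_sub_mod]

end Heights

section Labels

variable {d N : ℕ} [NeZero N] {π : Finpartition (univ : Finset (Fin N))}

lemma sawtooth_eq_of_isCyclicSuccIn (hd : 0 < d) (hN : 2 * d ∣ N) (hnc : IsNonCrossing π)
    {b : Finset (Fin N)} (hb : b ∈ π.parts) {i l : Fin N} (hil : IsCyclicSuccIn b i l)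
    (hli : l ≠ i)
    (hzero : ∀ b' ∈ π.parts, b' ⊆ cyclicIoo i l → ∑ x ∈ b', sawtoothSlope d x = 0) :
    sawtooth d l = sawtooth d (i + 1) := by
  have hsum : ∑ x ∈ cyclicIoo i l, sawtoothSlope d x = 0 := by
    rw [← univ_inter (cyclicIoo i l), ← π.biUnion_parts, biUnion_inter,
      sum_biUnion (π.disjoint.mono fun _ => inter_subset_left)]
    refine sum_eq_zero fun b' hb' => ?_
    rw [id_eq]
    rcases (b' ∩ cyclicIoo i l).eq_empty_or_nonempty with h | ⟨x, hx⟩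
    · rw [h, sum_empty]
    rw [mem_inter] at hx
    have hsub := hnc.subset_cyclicIoo hb hb' hil hx.1 hx.2
    rw [inter_eq_left.2 hsub]
    exact hzero b' hb' hsub
  linarith [sum_cyclicIoo_sawtoothSlope hd hN hli]

lemma label_eq_of_forall_isCyclicSuccIn (hd : 0 < d) (hN : 2 * d ∣ N) (hnc : IsNonCrossing π)
    (heven : ∀ b ∈ π.parts, Even b.card)
    (H : ∀ b ∈ π.parts, ∀ i ∈ b, ∀ l, IsCyclicSuccIn b i l → i.val / d % 2 ≠ l.val / d % 2)
    {i j : Fin N} (hij : SameBlock π i j) : label d i = label d j := by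
  have hzero (b : Finset (Fin N)) (hb : b ∈ π.parts) : ∑ x ∈ b, sawtoothSlope d x = 0 := by
    obtain ⟨x₀, hx₀⟩ := π.nonempty_of_mem_parts hb
    exact sum_sawtoothSlope_eq_zero (heven b hb) hx₀ fun x hx _ => H b hb x hx
  obtain ⟨b, hb, hi, hj⟩ := hij
  refine eq_of_forall_isCyclicSuccIn (f := fun x => label d x) (fun k hk l hkl => ?_) hi hj
  by_cases hlk : l = k
  · rw [hlk]
  exact (label_eq_label_iff hd (sawtooth_eq_of_isCyclicSuccIn hd hN hnc hb hkl hlk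
    fun b' hb' _ => hzero b' hb')).2 (H b hb k hk l hkl)

lemma forall_isCyclicSuccIn_of_label_eq (hd : 0 < d) (hN : 2 * d ∣ N) (hnc : IsNonCrossing π)
    (heven : ∀ b ∈ π.parts, Even b.card)
    (H : ∀ i j : Fin N, SameBlock π i j → label d i = label d j) :
    ∀ b ∈ π.parts, ∀ i ∈ b, ∀ l, IsCyclicSuccIn b i l → i.val / d % 2 ≠ l.val / d % 2 := by
  intro b hb i hi l hil
  induction hn : (l - i).val using Nat.strong_induction_on generalizing b i l with
  | _ n ih =>
    have hli := hil.ne (nontrivial_of_even_card (heven b hb) hi)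
    refine (label_eq_label_iff hd (sawtooth_eq_of_isCyclicSuccIn hd hN hnc hb hil hli ?_)).1
      (H i l ⟨b, hb, hi, hil.2.1⟩)
    intro b' hb' hsub
    obtain ⟨x₀, hx₀, hmax⟩ := exists_max_image b' (fun x => (x - i).val)
      (π.nonempty_of_mem_parts hb')
    refine sum_sawtoothSlope_eq_zero (heven b' hb') hx₀ fun x hx hxx₀ y hxy =>
      ih _ ?_ b' hb' x hx y hxy rfl
    calc (y - x).val ≤ (x₀ - x).val := hxy.val_sub_le hx₀ (Ne.symm hxx₀)
      _ ≤ (x₀ - i).val := by rw [val_sub_eq_val_sub_sub (hmax x hx)]; omega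
      _ < n := hn ▸ (mem_cyclicIoo.1 (hsub hx₀)).2

end Labels

/-- A non-crossing partition `π` of `[2dm]` with blocks of even cardinality belongs to
`NC*(d,m)` — i.e. any two cyclically consecutive elements of a block lie in intervals
`J_k` of different parity — if and only if every block of `π` is contained in a single
label class `A_i`. -/
theorem memNCstar_iff_label (d m : ℕ) (hd : 0 < d) (hm : 0 < m)
    (π : Finpartition (Finset.univ : Finset (Fin (2 * d * m))))
    (hnc : IsNonCrossing π) (heven : ∀ b ∈ π.parts, Even b.card) :
    (∀ b ∈ π.parts, ∀ i ∈ b, ∀ l : Fin (2 * d * m),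
        IsCyclicSuccIn b i l → ((i : ℕ) / d) % 2 ≠ ((l : ℕ) / d) % 2) ↔
      (∀ i j : Fin (2 * d * m), SameBlock π i j → label d i = label d j) := by
  have : NeZero (2 * d * m) := ⟨by positivity⟩
  have hN : 2 * d ∣ 2 * d * m := dvd_mul_right _ _
  exact ⟨fun H _ _ => label_eq_of_forall_isCyclicSuccIn hd hN hnc heven H,
    forall_isCyclicSuccIn_of_label_eq hd hN hnc heven⟩
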